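/- arXiv:1606.03524 — 2 statements merged into one kernel-verified Lean document; each statement's English description precedes it below -/
import Mathlib

section
/- Let g : (0,1] → [0,∞) satisfy sup_{0<x≤1} x g(x) < ∞ and g(x) ≥ ε on [1−ε,1] for some ε > 0. Define u(β) = ∫₀¹ x e^{βx} g(x) dx for β > 0. Then u is differentiable with u′(β) = ∫₀¹ x² e^{βx} g(x) dx > 0, hence strictly increasing, and its inverse function β(u) (defined for u large) satisfies: e^{β(u)}/u → ∞ as u → ∞, while for every ε′ > 0, e^{β(u)}/u^{1+ε′} → 0 as u → ∞. -/
open MeasureTheory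

/-- `g` is piecewise `C^k` on `[a,b]`: there is a finite partition
`a = pts 0 < pts 1 < ⋯ < pts L = b` such that on each open subinterval `g` agrees with
a function that is `C^k` on the corresponding closed subinterval (equivalently, `g` is
`C^k` on each open piece and `g` together with its first `k` derivatives has finite
one-sided limits at all the partition points). -/
def PiecewiseCOn (k : ℕ) (g : ℝ → ℝ) (a b : ℝ) : Prop :=
  ∃ (L : ℕ) (pts : ℕ → ℝ), 0 < L ∧ pts 0 = a ∧ pts L = b ∧
    (∀ j < L, pts j < pts (j + 1)) ∧
    (∀ j < L, ∃ G : ℝ → ℝ, ContDiffOn ℝ k G (Set.Icc (pts j) (pts (j + 1))) ∧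
      Set.EqOn g G (Set.Ioo (pts j) (pts (j + 1))))

/-- The cumulant generating function `C(θ) = ∫₀¹ (e^{θx} − 1) g(x) dx`. -/
noncomputable def cgf (g : ℝ → ℝ) (θ : ℝ) : ℝ :=
  ∫ x in (0:ℝ)..1, (Real.exp (θ * x) - 1) * g x

/-- `C′(β) = ∫₀¹ x e^{βx} g(x) dx`, the mean of the `β`-tilt. -/
noncomputable def cgfDeriv (g : ℝ → ℝ) (β : ℝ) : ℝ :=
  ∫ x in (0:ℝ)..1, x * Real.exp (β * x) * g x

/-- `C″(β) = ∫₀¹ x² e^{βx} g(x) dx`, the variance `σ_β²` of the `β`-tilt. -/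
noncomputable def cgfDeriv2 (g : ℝ → ℝ) (β : ℝ) : ℝ :=
  ∫ x in (0:ℝ)..1, x ^ 2 * Real.exp (β * x) * g x

/-!
Since `x g(x) ≤ M`, every integrand `xⁿ e^{βx} g(x)` with `n ≥ 1` is bounded by `M e^{max β 0}`,
which justifies differentiating under the integral sign. For the inverse function: from above,
`u(β) ≤ M ∫₀¹ e^{βx} dx ≤ M e^β / β`, so `e^{β(u)} / u ≥ β(u) / M → ∞`; from below, restricting
to `[1 - δ, 1]` where `g ≥ ε` gives `u(β) ≥ c e^{β/p}` for any `p > 1`, so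
`e^{β(u)} ≤ (u / c)^p`, which is `o(u^{1+ε′})` once `p < 1 + ε′`.
-/

open Real Set Filter Topology Interval

noncomputable def tiltMoment (g : ℝ → ℝ) (n : ℕ) (β : ℝ) : ℝ :=
  ∫ x in (0:ℝ)..1, x ^ n * exp (β * x) * g x

lemma cgfDeriv_eq_tiltMoment_one (g : ℝ → ℝ) : cgfDeriv g = tiltMoment g 1 := by
  funext β
  simp [cgfDeriv, tiltMoment]

section TiltMoment

variable {g : ℝ → ℝ} {M : ℝ} {n : ℕ}

lemma pow_mul_le_of_mul_le (hg_nonneg : ∀ x ∈ Ioc (0:ℝ) 1, 0 ≤ g x)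
    (hM : ∀ x ∈ Ioc (0:ℝ) 1, x * g x ≤ M) (hn : 1 ≤ n) {x : ℝ} (hx : x ∈ Ioc (0:ℝ) 1) :
    x ^ n * g x ≤ M :=
  (mul_le_mul_of_nonneg_right (pow_le_of_le_one hx.1.le hx.2 (by omega)) (hg_nonneg x hx)).trans
    (hM x hx)

lemma norm_tiltIntegrand_le (hg_nonneg : ∀ x ∈ Ioc (0:ℝ) 1, 0 ≤ g x)
    (hM : ∀ x ∈ Ioc (0:ℝ) 1, x * g x ≤ M) (hn : 1 ≤ n) {x β B : ℝ} (hx : x ∈ Ioc (0:ℝ) 1)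
    (hβB : β ≤ B) (hB : 0 ≤ B) :
    ‖x ^ n * exp (β * x) * g x‖ ≤ M * exp B := by
  have hexp : exp (β * x) ≤ exp B := exp_le_exp.2 <| calc
    β * x ≤ B * x := mul_le_mul_of_nonneg_right hβB hx.1.le
    _ ≤ B := mul_le_of_le_one_right hB hx.2
  have hmom := pow_mul_le_of_mul_le hg_nonneg hM hn hx
  have hg := hg_nonneg x hx
  have hx0 := hx.1.le
  rw [Real.norm_of_nonneg (by positivity), mul_right_comm]
  exact mul_le_mul hmom hexp (exp_pos _).le ((by positivity : 0 ≤ x ^ n * g x).trans hmom)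

lemma intervalIntegrable_tiltIntegrand (hg_meas : Measurable g)
    (hg_nonneg : ∀ x ∈ Ioc (0:ℝ) 1, 0 ≤ g x) (hM : ∀ x ∈ Ioc (0:ℝ) 1, x * g x ≤ M)
    (hn : 1 ≤ n) (β : ℝ) :
    IntervalIntegrable (fun x => x ^ n * exp (β * x) * g x) volume 0 1 := by
  refine (intervalIntegrable_const (c := M * exp (max β 0))).mono_fun'
    (by fun_prop : Measurable _).aestronglyMeasurable ?_
  filter_upwards [ae_restrict_mem measurableSet_uIoc] with x hx
  rw [uIoc_of_le zero_le_one] at hx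
  exact norm_tiltIntegrand_le hg_nonneg hM hn hx (le_max_left β 0) (le_max_right β 0)

lemma hasDerivAt_tiltMoment (hg_meas : Measurable g)
    (hg_nonneg : ∀ x ∈ Ioc (0:ℝ) 1, 0 ≤ g x) (hM : ∀ x ∈ Ioc (0:ℝ) 1, x * g x ≤ M)
    (hn : 1 ≤ n) (β₀ : ℝ) :
    HasDerivAt (tiltMoment g n) (tiltMoment g (n + 1) β₀) β₀ := by
  have hbound : ∀ x ∈ Ι (0:ℝ) 1, ∀ β ∈ Metric.ball β₀ 1,
      ‖x ^ (n + 1) * exp (β * x) * g x‖ ≤ M * exp (max (β₀ + 1) 0) := by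
    intro x hx β hβ
    rw [uIoc_of_le zero_le_one] at hx
    have hβ₀ := (abs_sub_lt_iff.1 (Metric.mem_ball.1 hβ)).1
    exact norm_tiltIntegrand_le hg_nonneg hM (by omega) hx
      ((by linarith : β ≤ β₀ + 1).trans (le_max_left _ _)) (le_max_right _ _)
  have hderiv : ∀ x β : ℝ, HasDerivAt (fun β => x ^ n * exp (β * x) * g x)
      (x ^ (n + 1) * exp (β * x) * g x) β := by
    intro x β
    refine ((((hasDerivAt_id' β).mul_const x).exp.const_mul (x ^ n)).mul_const (g x)).congr_deriv ?_
    ring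
  exact (intervalIntegral.hasDerivAt_integral_of_dominated_loc_of_deriv_le
    (Metric.ball_mem_nhds β₀ one_pos)
    (Eventually.of_forall fun β => (by fun_prop : Measurable _).aestronglyMeasurable)
    (intervalIntegrable_tiltIntegrand hg_meas hg_nonneg hM hn β₀)
    (by fun_prop : Measurable _).aestronglyMeasurable (ae_of_all _ hbound)
    intervalIntegrable_const (ae_of_all _ fun x _ β _ => hderiv x β)).2

lemma tiltMoment_le_mul_exp_max (hg_nonneg : ∀ x ∈ Ioc (0:ℝ) 1, 0 ≤ g x)
    (hM : ∀ x ∈ Ioc (0:ℝ) 1, x * g x ≤ M) (hn : 1 ≤ n) (β : ℝ) :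
    tiltMoment g n β ≤ M * exp (max β 0) := by
  have := intervalIntegral.norm_integral_le_of_norm_le_const fun x (hx : x ∈ Ι (0:ℝ) 1) =>
    norm_tiltIntegrand_le (β := β) hg_nonneg hM hn (by rwa [uIoc_of_le zero_le_one] at hx)
      (le_max_left β 0) (le_max_right β 0)
  simp only [sub_zero, abs_one, mul_one, Real.norm_eq_abs] at this
  exact (le_abs_self _).trans this

lemma tiltMoment_le_mul_exp_div (hg_meas : Measurable g)
    (hg_nonneg : ∀ x ∈ Ioc (0:ℝ) 1, 0 ≤ g x) (hM : ∀ x ∈ Ioc (0:ℝ) 1, x * g x ≤ M)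
    (hn : 1 ≤ n) {β : ℝ} (hβ : 0 < β) :
    tiltMoment g n β ≤ M * exp β / β := by
  have hM0 : 0 ≤ M := by
    have h1 : (1:ℝ) ∈ Ioc 0 1 := ⟨one_pos, le_rfl⟩
    exact (mul_nonneg zero_le_one (hg_nonneg 1 h1)).trans (hM 1 h1)
  have hexp : ∫ x in (0:ℝ)..1, exp (β * x) = (exp β - 1) / β := by
    rw [intervalIntegral.integral_comp_mul_left (fun x => exp x) hβ.ne', integral_exp]
    simp [div_eq_inv_mul]
  calc tiltMoment g n β ≤ ∫ x in (0:ℝ)..1, M * exp (β * x) := by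
        refine intervalIntegral.integral_mono_on_of_le_Ioo zero_le_one
          (intervalIntegrable_tiltIntegrand hg_meas hg_nonneg hM hn β)
          ((by fun_prop : Continuous _).intervalIntegrable 0 1) fun x hx => ?_
        rw [mul_right_comm]
        exact mul_le_mul_of_nonneg_right
          (pow_mul_le_of_mul_le hg_nonneg hM hn (Ioo_subset_Ioc_self hx)) (exp_pos _).le
    _ = M * ((exp β - 1) / β) := by rw [intervalIntegral.integral_const_mul, hexp]
    _ ≤ M * exp β / β := by
        rw [mul_div_assoc]
        gcongr
        linarith

lemma mul_exp_le_tiltMoment (hg_meas : Measurable g)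
    (hg_nonneg : ∀ x ∈ Ioc (0:ℝ) 1, 0 ≤ g x) (hM : ∀ x ∈ Ioc (0:ℝ) 1, x * g x ≤ M)
    {ε : ℝ} (hg_low : ∀ x ∈ Icc (1 - ε) 1, ε ≤ g x) (hn : 1 ≤ n) {δ β : ℝ} (hδ : 0 < δ)
    (hδε : δ ≤ ε) (hδ1 : δ ≤ 1) (hβ : 0 ≤ β) :
    δ ^ 2 * (1 - δ) ^ n * exp ((1 - δ) * β) ≤ tiltMoment g n β := by
  have hint : IntegrableOn (fun x => x ^ n * exp (β * x) * g x) (Ioc 0 1) :=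
    (intervalIntegrable_iff_integrableOn_Ioc_of_le zero_le_one).1
      (intervalIntegrable_tiltIntegrand hg_meas hg_nonneg hM hn β)
  have hsub : Ioc (1 - δ) 1 ⊆ Ioc 0 1 := Ioc_subset_Ioc_left (by linarith)
  have hlow : ∀ x ∈ Ioc (1 - δ) 1,
      δ * (1 - δ) ^ n * exp ((1 - δ) * β) ≤ x ^ n * exp (β * x) * g x := by
    intro x hx
    have hpow : (1 - δ) ^ n ≤ x ^ n := pow_le_pow_left₀ (by linarith) hx.1.le n
    have hexp : exp ((1 - δ) * β) ≤ exp (β * x) := exp_le_exp.2 (by nlinarith [hx.1])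
    have hg : δ ≤ g x := hδε.trans (hg_low x ⟨by linarith [hx.1], hx.2⟩)
    calc δ * (1 - δ) ^ n * exp ((1 - δ) * β) = (1 - δ) ^ n * exp ((1 - δ) * β) * δ := by ring
      _ ≤ x ^ n * exp (β * x) * g x := by
          have hx0 : 0 ≤ x := by linarith [hx.1]
          gcongr
  calc δ ^ 2 * (1 - δ) ^ n * exp ((1 - δ) * β)
        = δ * (1 - δ) ^ n * exp ((1 - δ) * β) * volume.real (Ioc (1 - δ) 1) := by
          rw [Real.volume_real_Ioc_of_le (by linarith)]
          ring
    _ ≤ ∫ x in Ioc (1 - δ) 1, x ^ n * exp (β * x) * g x :=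
        setIntegral_ge_of_const_le_real measurableSet_Ioc measure_Ioc_lt_top.ne hlow
          (hint.mono_set hsub)
    _ ≤ ∫ x in Ioc 0 1, x ^ n * exp (β * x) * g x := by
        refine setIntegral_mono_set hint ?_ hsub.eventuallyLE
        filter_upwards [ae_restrict_mem measurableSet_Ioc] with x hx
        have := hg_nonneg x hx
        have := hx.1.le
        positivity
    _ = tiltMoment g n β := (intervalIntegral.integral_of_le zero_le_one).symm

lemma exists_pos_mul_exp_div_le_tiltMoment (hg_meas : Measurable g)
    (hg_nonneg : ∀ x ∈ Ioc (0:ℝ) 1, 0 ≤ g x) (hM : ∀ x ∈ Ioc (0:ℝ) 1, x * g x ≤ M)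
    {ε : ℝ} (hε : 0 < ε) (hg_low : ∀ x ∈ Icc (1 - ε) 1, ε ≤ g x) (hn : 1 ≤ n) {p : ℝ}
    (hp : 1 < p) :
    ∃ c > 0, ∀ β ≥ 0, c * exp (β / p) ≤ tiltMoment g n β := by
  set δ := min (1 - p⁻¹) (min ε 2⁻¹)
  have hp_inv : p⁻¹ < 1 := inv_lt_one_of_one_lt₀ hp
  have hδ : 0 < δ := lt_min (by linarith) (lt_min hε (by norm_num))
  have hδp : δ ≤ 1 - p⁻¹ := min_le_left _ _
  have hδε : δ ≤ ε := (min_le_right _ _).trans (min_le_left _ _)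
  have hδ2 : δ ≤ 2⁻¹ := (min_le_right _ _).trans (min_le_right _ _)
  have hc : 0 < δ ^ 2 * (1 - δ) ^ n := mul_pos (by positivity) (pow_pos (by linarith) n)
  refine ⟨_, hc, fun β hβ => ?_⟩
  calc δ ^ 2 * (1 - δ) ^ n * exp (β / p) ≤ δ ^ 2 * (1 - δ) ^ n * exp ((1 - δ) * β) := by
        refine mul_le_mul_of_nonneg_left (exp_le_exp.2 ?_) hc.le
        rw [div_eq_inv_mul]
        exact mul_le_mul_of_nonneg_right (by linarith) hβ
    _ ≤ tiltMoment g n β :=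
        mul_exp_le_tiltMoment hg_meas hg_nonneg hM hg_low hn hδ hδε (by linarith) hβ

lemma tiltMoment_pos (hg_meas : Measurable g)
    (hg_nonneg : ∀ x ∈ Ioc (0:ℝ) 1, 0 ≤ g x) (hM : ∀ x ∈ Ioc (0:ℝ) 1, x * g x ≤ M)
    {ε : ℝ} (hε : 0 < ε) (hg_low : ∀ x ∈ Icc (1 - ε) 1, ε ≤ g x) (hn : 1 ≤ n) {β : ℝ}
    (hβ : 0 ≤ β) :
    0 < tiltMoment g n β := by
  obtain ⟨c, hc, hlow⟩ :=
    exists_pos_mul_exp_div_le_tiltMoment hg_meas hg_nonneg hM hε hg_low hn one_lt_two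
  exact (mul_pos hc (exp_pos _)).trans_le (hlow β hβ)

end TiltMoment

section RightInverse

variable {u b : ℝ → ℝ} {M : ℝ}

lemma tendsto_atTop_of_eventually_rightInverse (hM : 0 < M)
    (hu : ∀ β, u β ≤ M * exp (max β 0)) (hb : ∀ᶠ v in atTop, u (b v) = v) :
    Tendsto b atTop atTop := by
  have hmax : Tendsto (fun v => max (b v) 0) atTop atTop := by
    rw [← tendsto_exp_comp_atTop]
    refine tendsto_atTop_mono' atTop ?_ (tendsto_id.atTop_div_const hM)
    filter_upwards [hb] with v hv
    rw [id, div_le_iff₀' hM]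
    exact hv.ge.trans (hu (b v))
  refine hmax.congr' ?_
  filter_upwards [hmax.eventually_gt_atTop 0] with v hv
  exact max_eq_left (by simpa using hv : 0 < b v).le

lemma tendsto_exp_div_atTop_of_eventually_rightInverse (hM : 0 < M)
    (hu : ∀ β > 0, u β ≤ M * exp β / β) (hb : ∀ᶠ v in atTop, u (b v) = v)
    (hb_top : Tendsto b atTop atTop) :
    Tendsto (fun v => exp (b v) / v) atTop atTop := by
  refine tendsto_atTop_mono' atTop ?_ (hb_top.atTop_div_const hM)
  filter_upwards [hb, hb_top.eventually_gt_atTop 0, eventually_gt_atTop 0] with v hv hbv hv0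
  have := hv.ge.trans (hu (b v) hbv)
  rw [le_div_iff₀ hbv] at this
  rw [div_le_div_iff₀ hM hv0]
  linarith

lemma tendsto_exp_div_rpow_of_eventually_rightInverse
    (hu : ∀ p > 1, ∃ c > 0, ∀ β ≥ 0, c * exp (β / p) ≤ u β) (hb : ∀ᶠ v in atTop, u (b v) = v)
    (hb_top : Tendsto b atTop atTop) {ε' : ℝ} (hε' : 0 < ε') :
    Tendsto (fun v => exp (b v) / v ^ (1 + ε')) atTop (𝓝 0) := by
  set p := 1 + ε' / 2 with hp_def
  have hp : 0 < p := by positivity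
  obtain ⟨c, hc, hlow⟩ := hu p (by linarith)
  have hle : ∀ᶠ v in atTop, exp (b v) / v ^ (1 + ε') ≤ c ^ (-p) * v ^ (-(ε' / 2)) := by
    filter_upwards [hb, hb_top.eventually_ge_atTop 0, eventually_gt_atTop 0] with v hv hbv hv0
    have hexp : exp (b v / p) ≤ v / c := by
      rw [le_div_iff₀' hc]
      exact (hlow (b v) hbv).trans hv.le
    calc exp (b v) / v ^ (1 + ε') = exp (b v / p) ^ p / v ^ (1 + ε') := by
          rw [← exp_mul, div_mul_cancel₀ _ hp.ne']
      _ ≤ (v / c) ^ p / v ^ (1 + ε') := by gcongr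
      _ = c ^ (-p) * v ^ (-(ε' / 2)) := by
          rw [div_rpow hv0.le hc.le, rpow_neg hc.le, show -(ε' / 2) = p - (1 + ε') by ring,
            rpow_sub hv0]
          ring
  have hlim : Tendsto (fun v : ℝ => c ^ (-p) * v ^ (-(ε' / 2))) atTop (𝓝 0) := by
    simpa using (tendsto_rpow_neg_atTop (half_pos hε')).const_mul (c ^ (-p))
  refine squeeze_zero' ?_ hle hlim
  filter_upwards [eventually_gt_atTop 0] with v hv
  positivity

end RightInverse

/-- **Lemma (growth of the mean of the tilt and of its inverse function).**
Let `g : (0,1] → [0,∞)` satisfy `sup x g(x) < ∞` and `g ≥ ε` on `[1−ε,1]`, and let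
`u(β) = ∫₀¹ x e^{βx} g(x) dx`. Then `u′(β) = ∫₀¹ x² e^{βx} g(x) dx > 0` for `β > 0`,
so `u` is strictly increasing on `(0,∞)`; and any inverse function `β(·)` of `u`
(i.e. any `b` with `u(b(v)) = v` for all large `v`) satisfies `e^{b(v)}/v → ∞` while
`e^{b(v)}/v^{1+ε′} → 0` for every `ε′ > 0`, as `v → ∞`. -/
theorem stmt8
    (g : ℝ → ℝ) (hg_meas : Measurable g)
    (hg_nonneg : ∀ x ∈ Set.Ioc (0:ℝ) 1, 0 ≤ g x)
    (M : ℝ) (hM : ∀ x ∈ Set.Ioc (0:ℝ) 1, x * g x ≤ M)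
    (ε : ℝ) (hε : 0 < ε) (hg_low : ∀ x ∈ Set.Icc (1 - ε) 1, ε ≤ g x) :
    (∀ β : ℝ, 0 < β →
      HasDerivAt (cgfDeriv g) (cgfDeriv2 g β) β ∧ 0 < cgfDeriv2 g β) ∧
    StrictMonoOn (cgfDeriv g) (Set.Ioi 0) ∧
    (∀ b : ℝ → ℝ, (∀ᶠ v in Filter.atTop, cgfDeriv g (b v) = v) →
      Filter.Tendsto (fun v => Real.exp (b v) / v) Filter.atTop Filter.atTop ∧
      ∀ ε' : ℝ, 0 < ε' →
        Filter.Tendsto (fun v => Real.exp (b v) / v ^ (1 + ε'))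
          Filter.atTop (nhds 0)) := by
  have hM0 : 0 < M := by
    have h1 : (1:ℝ) ∈ Ioc 0 1 := ⟨one_pos, le_rfl⟩
    linarith [hg_low 1 ⟨by linarith, le_rfl⟩, one_mul (g 1) ▸ hM 1 h1]
  have hderiv (β : ℝ) : HasDerivAt (cgfDeriv g) (cgfDeriv2 g β) β := by
    rw [cgfDeriv_eq_tiltMoment_one]
    exact hasDerivAt_tiltMoment hg_meas hg_nonneg hM le_rfl β
  have hpos {β : ℝ} (hβ : 0 ≤ β) : 0 < cgfDeriv2 g β :=
    tiltMoment_pos hg_meas hg_nonneg hM hε hg_low one_le_two hβ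
  refine ⟨fun β hβ => ⟨hderiv β, hpos hβ.le⟩, ?_, fun b hb => ?_⟩
  · refine strictMonoOn_of_deriv_pos (convex_Ioi 0)
      (fun β _ => (hderiv β).continuousAt.continuousWithinAt) fun β hβ => ?_
    rw [interior_Ioi] at hβ
    exact (hderiv β).deriv ▸ hpos (le_of_lt hβ)
  · rw [cgfDeriv_eq_tiltMoment_one] at hb
    have hb_top := tendsto_atTop_of_eventually_rightInverse hM0
      (tiltMoment_le_mul_exp_max hg_nonneg hM le_rfl) hb
    exact ⟨tendsto_exp_div_atTop_of_eventually_rightInverse hM0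
        (fun β => tiltMoment_le_mul_exp_div hg_meas hg_nonneg hM le_rfl) hb hb_top,
      fun ε' => tendsto_exp_div_rpow_of_eventually_rightInverse
        (fun p => exists_pos_mul_exp_div_le_tiltMoment hg_meas hg_nonneg hM hε hg_low le_rfl)
        hb hb_top⟩
end

section
/- Let g : [0,1] → [0,∞) be measurable and satisfy g(x) ≥ ε on [1−ε,1] for some ε ∈ (0,1), and suppose ∫₀¹ e^{βx} g(x) dx < ∞ for all β. Define H(τ) = ∫₀¹ e^{βx} (1 − cos(τx)) g(x) dx. Then there exists β₀ such that for all β ≥ β₀ and all real τ with |τ| ≥ π, H(τ) > (ε π²/8) · e^β/β³. -/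
/-!
As `g ≥ 0`, and `g ≥ ε` on `[1 - ε, 1]`, `H(τ) ≥ ε ∫_{1-ε}^1 e^{βx}(1 - cos τx) dx`, and this integrand
has the explicit primitive `P(x) = e^{βx}/β - e^{βx}(β cos τx + τ sin τx)/(β² + τ²)`.
Since `β cos θ + τ sin θ ≤ √(β² + τ²)` and `τ² ≥ π²`, `P(1) ≥ π² e^β/(4β³)` for `β ≥ π`, while
`P(1 - ε) ≤ 2e^{β(1-ε)}/β`, which drops below `π² e^β/(8β³)` as soon as `π² e^{εβ} > 16β²`.
-/

open MeasureTheory Real Filter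

noncomputable def primitiveExpOneSubCos (β τ x : ℝ) : ℝ :=
  exp (β * x) / β - exp (β * x) * (β * cos (τ * x) + τ * sin (τ * x)) / (β ^ 2 + τ ^ 2)

section Primitive

variable {β : ℝ} (τ : ℝ)

theorem hasDerivAt_primitiveExpOneSubCos (hβ : β ≠ 0) (x : ℝ) :
    HasDerivAt (primitiveExpOneSubCos β τ) (exp (β * x) * (1 - cos (τ * x))) x := by
  have hexp : HasDerivAt (fun y => exp (β * y)) (exp (β * x) * β) x := by
    simpa using ((hasDerivAt_id x).const_mul β).exp
  have htrig : HasDerivAt (fun y => β * cos (τ * y) + τ * sin (τ * y))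
      (β * (-sin (τ * x) * τ) + τ * (cos (τ * x) * τ)) x := by
    have hcos := (((hasDerivAt_id x).const_mul τ).cos).const_mul β
    have hsin := (((hasDerivAt_id x).const_mul τ).sin).const_mul τ
    simpa [mul_comm, mul_assoc] using hcos.fun_add hsin
  refine ((hexp.div_const β).fun_sub ((hexp.fun_mul htrig).div_const _)).congr_deriv ?_
  have : β ^ 2 + τ ^ 2 ≠ 0 := by positivity
  field_simp
  ring

theorem integral_exp_mul_one_sub_cos (hβ : β ≠ 0) (a b : ℝ) :
    ∫ x in a..b, exp (β * x) * (1 - cos (τ * x)) =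
      primitiveExpOneSubCos β τ b - primitiveExpOneSubCos β τ a :=
  intervalIntegral.integral_eq_sub_of_hasDerivAt
    (fun x _ => hasDerivAt_primitiveExpOneSubCos τ hβ x)
    ((by fun_prop : Continuous _).intervalIntegrable a b)

theorem mul_cos_add_mul_sin_sq_le (β θ : ℝ) :
    (β * cos θ + τ * sin θ) ^ 2 ≤ β ^ 2 + τ ^ 2 := by
  nlinarith [sin_sq_add_cos_sq θ, sq_nonneg (β * sin θ - τ * cos θ)]

theorem primitiveExpOneSubCos_le (hβ : 0 < β) (x : ℝ) :
    primitiveExpOneSubCos β τ x ≤ 2 * exp (β * x) / β := by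
  set v := β * cos (τ * x) + τ * sin (τ * x)
  have hv : v ^ 2 ≤ β ^ 2 + τ ^ 2 := mul_cos_add_mul_sin_sq_le τ β (τ * x)
  have hs : 0 < β ^ 2 + τ ^ 2 := by positivity
  have : -(1 / β) ≤ v / (β ^ 2 + τ ^ 2) := by
    rw [neg_le, ← neg_div, div_le_div_iff₀ hs hβ]
    nlinarith [sq_nonneg (v + β), sq_nonneg τ]
  have hexp := exp_pos (β * x)
  calc primitiveExpOneSubCos β τ x = exp (β * x) * (1 / β - v / (β ^ 2 + τ ^ 2)) := by
        unfold primitiveExpOneSubCos; ring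
    _ ≤ exp (β * x) * (1 / β + 1 / β) := by gcongr; linarith
    _ = 2 * exp (β * x) / β := by ring

theorem le_primitiveExpOneSubCos (hβ : π ≤ β) (hτ : π ≤ |τ|) (x : ℝ) :
    exp (β * x) * (π ^ 2 / (4 * β ^ 3)) ≤ primitiveExpOneSubCos β τ x := by
  set v := β * cos (τ * x) + τ * sin (τ * x)
  set s := β ^ 2 + τ ^ 2
  have hv : v ^ 2 ≤ s := mul_cos_add_mul_sin_sq_le τ β (τ * x)
  have hβ0 : 0 < β := pi_pos.trans_le hβ
  have hπβ : π ^ 2 ≤ β ^ 2 := by gcongr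
  have hπτ : π ^ 2 ≤ τ ^ 2 := by
    rw [← sq_abs τ]; exact pow_le_pow_left₀ pi_pos.le hτ 2
  have hs : β ^ 2 + π ^ 2 ≤ s := by linarith
  -- `v ≤ √s`, and `√s ≤ s (4β² - π²)/(4β³)` amounts to `16β⁶ ≤ s (4β² - π²)²`
  have hc : 0 ≤ s * (4 * β ^ 2 - π ^ 2) := by nlinarith
  have hsc : 16 * β ^ 6 ≤ s * (4 * β ^ 2 - π ^ 2) ^ 2 := by
    have : 16 * β ^ 6 ≤ (β ^ 2 + π ^ 2) * (4 * β ^ 2 - π ^ 2) ^ 2 := by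
      nlinarith [mul_nonneg (by positivity : 0 ≤ π ^ 2 * β ^ 2) (sub_nonneg.2 hπβ),
        (by positivity : 0 ≤ β ^ 2 * π ^ 4), (by positivity : 0 ≤ π ^ 6)]
    nlinarith [mul_le_mul_of_nonneg_right hs (sq_nonneg (4 * β ^ 2 - π ^ 2))]
  have hv' : 4 * β ^ 3 * v ≤ s * (4 * β ^ 2 - π ^ 2) := by
    refine (abs_le_of_sq_le_sq ?_ hc).trans' (le_abs_self _)
    nlinarith [mul_le_mul_of_nonneg_left hv (by positivity : 0 ≤ 16 * β ^ 6),
      mul_le_mul_of_nonneg_left hsc (by positivity : 0 ≤ s)]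
  have : π ^ 2 / (4 * β ^ 3) ≤ 1 / β - v / s := by
    have hs0 : 0 < s := by positivity
    rw [le_sub_comm, div_le_iff₀ hs0]
    field_simp
    linarith
  calc exp (β * x) * (π ^ 2 / (4 * β ^ 3))
      ≤ exp (β * x) * (1 / β - v / s) := by gcongr
    _ = primitiveExpOneSubCos β τ x := by unfold primitiveExpOneSubCos; ring

end Primitive

theorem pi_sq_div_eight_mul_exp_div_lt_integral {β τ ε : ℝ} (hβ : π ≤ β) (hτ : π ≤ |τ|)
    (hgrowth : 16 * β ^ 2 < π ^ 2 * exp (ε * β)) :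
    π ^ 2 / 8 * (exp β / β ^ 3) < ∫ x in (1 - ε)..1, exp (β * x) * (1 - cos (τ * x)) := by
  have hβ0 : 0 < β := pi_pos.trans_le hβ
  rw [integral_exp_mul_one_sub_cos τ hβ0.ne']
  have hupper := le_primitiveExpOneSubCos τ hβ hτ 1
  have hlower := primitiveExpOneSubCos_le τ hβ0 (1 - ε)
  rw [mul_one] at hupper
  have hsplit : exp β = exp (β * (1 - ε)) * exp (ε * β) := by rw [← exp_add]; ring_nf
  have hsmall : 2 * exp (β * (1 - ε)) / β < π ^ 2 / 8 * (exp β / β ^ 3) := by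
    rw [hsplit]
    field_simp
    rw [mul_comm ε] at hgrowth
    linarith
  have : exp β * (π ^ 2 / (4 * β ^ 3)) = 2 * (π ^ 2 / 8 * (exp β / β ^ 3)) := by ring
  linarith

theorem eventually_mul_sq_lt_exp_mul {C ε : ℝ} (hC : 0 < C) (hε : 0 < ε) :
    ∀ᶠ x in atTop, C * x ^ 2 < exp (ε * x) := by
  filter_upwards [(isLittleO_pow_exp_pos_mul_atTop 2 hε).bound (by positivity : 0 < 1 / (2 * C))]
    with x hx
  rw [norm_of_nonneg (sq_nonneg x), norm_of_nonneg (exp_pos _).le] at hx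
  calc C * x ^ 2 ≤ C * (1 / (2 * C) * exp (ε * x)) := by gcongr
    _ = exp (ε * x) / 2 := by field_simp
    _ < exp (ε * x) := half_lt_self (exp_pos _)

theorem mul_integral_le_integral_mul {F g : ℝ → ℝ} {a b c m : ℝ} (hab : a ≤ b) (hbc : b ≤ c)
    (hF0 : ∀ x ∈ Set.Icc a c, 0 ≤ F x) (hg0 : ∀ x ∈ Set.Icc a c, 0 ≤ g x)
    (hgm : ∀ x ∈ Set.Icc b c, m ≤ g x) (hF : IntervalIntegrable F volume b c)
    (hFg : IntervalIntegrable (fun x => F x * g x) volume a c) :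
    m * ∫ x in b..c, F x ≤ ∫ x in a..c, F x * g x := by
  have hb : b ∈ Set.uIcc a c := Set.mem_uIcc_of_le hab hbc
  have hFg_ab := hFg.mono_set (Set.uIcc_subset_uIcc Set.left_mem_uIcc hb)
  have hFg_bc := hFg.mono_set (Set.uIcc_subset_uIcc hb Set.right_mem_uIcc)
  rw [← intervalIntegral.integral_add_adjacent_intervals hFg_ab hFg_bc,
    ← intervalIntegral.integral_const_mul]
  have hleft : 0 ≤ ∫ x in a..b, F x * g x :=
    intervalIntegral.integral_nonneg hab fun x hx =>
      mul_nonneg (hF0 x ⟨hx.1, hx.2.trans hbc⟩) (hg0 x ⟨hx.1, hx.2.trans hbc⟩)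
  have hright : ∫ x in b..c, m * F x ≤ ∫ x in b..c, F x * g x :=
    intervalIntegral.integral_mono_on hbc (hF.const_mul m) hFg_bc fun x hx => by
      rw [mul_comm (F x)]
      exact mul_le_mul_of_nonneg_right (hgm x hx) (hF0 x ⟨hab.trans hx.1, hx.2⟩)
  linarith

theorem stmt13_general
    (g : ℝ → ℝ)
    (hg_nonneg : ∀ x ∈ Set.Icc (0:ℝ) 1, 0 ≤ g x)
    (ε : ℝ) (hε : ε ∈ Set.Ioo (0:ℝ) 1)
    (hg_low : ∀ x ∈ Set.Icc (1 - ε) 1, ε ≤ g x)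
    (hint : ∀ β : ℝ, IntervalIntegrable (fun x => Real.exp (β * x) * g x) volume 0 1) :
    ∃ β₀ : ℝ, ∀ β : ℝ, β₀ ≤ β → ∀ τ : ℝ, Real.pi ≤ |τ| →
      (ε * Real.pi ^ 2 / 8) * (Real.exp β / β ^ 3)
        < ∫ x in (0:ℝ)..1, Real.exp (β * x) * (1 - Real.cos (τ * x)) * g x := by
  obtain ⟨hε0, hε1⟩ := hε
  obtain ⟨β₀, hβ₀⟩ := eventually_atTop.1 <| (eventually_ge_atTop π).and <|
    eventually_mul_sq_lt_exp_mul (by positivity : 0 < 16 / π ^ 2) hε0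
  refine ⟨β₀, fun β hβ τ hτ => ?_⟩
  obtain ⟨hπβ, hgrowth⟩ := hβ₀ β hβ
  rw [div_mul_eq_mul_div, div_lt_iff₀ (by positivity), mul_comm (exp _)] at hgrowth
  have hF0 : ∀ x, 0 ≤ exp (β * x) * (1 - cos (τ * x)) := fun x =>
    mul_nonneg (exp_pos _).le (sub_nonneg.2 (cos_le_one _))
  have hFg : IntervalIntegrable (fun x => exp (β * x) * (1 - cos (τ * x)) * g x) volume 0 1 := by
    convert (hint β).continuousOn_mul (g := fun x => 1 - cos (τ * x)) (by fun_prop) using 2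
    ring
  calc ε * π ^ 2 / 8 * (exp β / β ^ 3) = ε * (π ^ 2 / 8 * (exp β / β ^ 3)) := by ring
    _ < ε * ∫ x in (1 - ε)..1, exp (β * x) * (1 - cos (τ * x)) :=
      mul_lt_mul_of_pos_left (pi_sq_div_eight_mul_exp_div_lt_integral hπβ hτ hgrowth) hε0
    _ ≤ ∫ x in (0:ℝ)..1, exp (β * x) * (1 - cos (τ * x)) * g x :=
      mul_integral_le_integral_mul (by linarith) (by linarith) (fun x _ => hF0 x) hg_nonneg
        hg_low ((by fun_prop : Continuous _).intervalIntegrable _ _) hFg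

/-- **Lemma (lower bound for `H(τ)` on `|τ| ≥ π`).**
Let `g : [0,1] → [0,∞)` be measurable with `g ≥ ε` on `[1−ε,1]` for some `ε ∈ (0,1)`,
and with `∫₀¹ e^{βx} g(x) dx < ∞` for all `β`. Let
`H(τ) = ∫₀¹ e^{βx} (1 − cos(τx)) g(x) dx`. Then there is `β₀` such that for all
`β ≥ β₀` and all `τ` with `|τ| ≥ π`, `H(τ) > (ε π²/8) e^β/β³`. -/
theorem stmt13
    (g : ℝ → ℝ) (hg_meas : Measurable g)
    (hg_nonneg : ∀ x ∈ Set.Icc (0:ℝ) 1, 0 ≤ g x)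
    (ε : ℝ) (hε : ε ∈ Set.Ioo (0:ℝ) 1)
    (hg_low : ∀ x ∈ Set.Icc (1 - ε) 1, ε ≤ g x)
    (hint : ∀ β : ℝ, IntervalIntegrable (fun x => Real.exp (β * x) * g x) volume 0 1) :
    ∃ β₀ : ℝ, ∀ β : ℝ, β₀ ≤ β → ∀ τ : ℝ, Real.pi ≤ |τ| →
      (ε * Real.pi ^ 2 / 8) * (Real.exp β / β ^ 3)
        < ∫ x in (0:ℝ)..1, Real.exp (β * x) * (1 - Real.cos (τ * x)) * g x :=
  stmt13_general g hg_nonneg ε hε hg_low hint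
end
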